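/- Let C be a compact Hausdorff topological group which is an inverse limit of a directed system of compact Lie groups L_i. If the identity component L_i⁰ is abelian for every i, then the identity component C⁰ of C is abelian. -/

import Mathlib

/-! The projections separate the points of `C` and carry `C⁰` into the abelian groups `L_i⁰`
(a continuous map sends a connected component into a connected component), so any two elements
of `C⁰` have commuting images in every `L_i`, and hence commute. -/

open Function

theorem MonoidHom.map_mem_connectedComponent_one {M N : Type*} [MulOneClass M] [MulOneClass N]
    [TopologicalSpace M] [TopologicalSpace N] (f : M →* N) (hf : Continuous f) {x : M}
    (hx : x ∈ connectedComponent (1 : M)) : f x ∈ connectedComponent (1 : N) :=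
  map_one f ▸ hf.mapsTo_connectedComponent 1 hx

theorem commute_of_mem_connectedComponent_one_of_injective {ι M : Type*} {N : ι → Type*}
    [Monoid M] [∀ i, Monoid (N i)] [TopologicalSpace M] [∀ i, TopologicalSpace (N i)]
    (f : ∀ i, M →* N i) (hf : ∀ i, Continuous (f i)) (hinj : Injective fun x i ↦ f i x)
    (hN : ∀ i, ∀ a ∈ connectedComponent (1 : N i), ∀ b ∈ connectedComponent (1 : N i),
      a * b = b * a)
    {a b : M} (ha : a ∈ connectedComponent (1 : M)) (hb : b ∈ connectedComponent (1 : M)) :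
    Commute a b :=
  hinj <| funext fun i ↦ by
    simpa only [map_mul] using
      hN i _ ((f i).map_mem_connectedComponent_one (hf i) ha)
        _ ((f i).map_mem_connectedComponent_one (hf i) hb)

theorem stmt17_general {ι : Type*}
    {C : Type*} [Group C] [TopologicalSpace C]
    (L : ι → Type*) [∀ i, Group (L i)] [∀ i, TopologicalSpace (L i)]
    (π : ∀ i, C →* L i)
    (hcont : ∀ i, Continuous (π i))
    (hemb : Topology.IsEmbedding (fun c i => π i c : C → ∀ i, L i))
    (hab : ∀ i, ∀ a ∈ connectedComponent (1 : L i), ∀ b ∈ connectedComponent (1 : L i),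
      a * b = b * a) :
    ∀ a ∈ connectedComponent (1 : C), ∀ b ∈ connectedComponent (1 : C), a * b = b * a :=
  fun _ ha _ hb ↦
    (commute_of_mem_connectedComponent_one_of_injective π hcont hemb.injective hab ha hb).eq

theorem stmt17 {ι : Type*} [Preorder ι] [IsDirected ι (· ≤ ·)]
    {C : Type*} [Group C] [TopologicalSpace C] [IsTopologicalGroup C]
    [CompactSpace C] [T2Space C]
    (L : ι → Type*) [∀ i, Group (L i)] [∀ i, TopologicalSpace (L i)]
    [∀ i, IsTopologicalGroup (L i)] [∀ i, CompactSpace (L i)] [∀ i, T2Space (L i)]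
    (π : ∀ i, C →* L i)
    (hcont : ∀ i, Continuous (π i))
    (hsurj : ∀ i, Function.Surjective (π i))
    (hemb : Topology.IsEmbedding (fun c i => π i c : C → ∀ i, L i))
    (hab : ∀ i, ∀ a ∈ connectedComponent (1 : L i), ∀ b ∈ connectedComponent (1 : L i),
      a * b = b * a) :
    ∀ a ∈ connectedComponent (1 : C), ∀ b ∈ connectedComponent (1 : C), a * b = b * a :=
  stmt17_general L π hcont hemb hab
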